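/- arXiv:2603.02763 — 5 statements merged into one kernel-verified Lean document; each statement's English description precedes it below -/
import Mathlib

section
/- Consider the single-cell (plaquette) update on a periodic N×N grid: given a discrete field E and a cell (i,j), modify the four edge values by E_{i,j+1/2} ← E_{i,j+1/2} - η/(ε_{i,j+1/2}Δx), E_{i+1,j+1/2} ← E_{i+1,j+1/2} + η/(ε_{i+1,j+1/2}Δx), E_{i+1/2,j} ← E_{i+1/2,j} + η/(ε_{i+1/2,j}Δy), E_{i+1/2,j+1} ← E_{i+1/2,j+1} - η/(ε_{i+1/2,j+1}Δy). Then the discrete divergence of εE, defined by (∇_h·(εE))_{m,n} = (ε_{m+1/2,n}E_{m+1/2,n} - ε_{m-1/2,n}E_{m-1/2,n})/Δx + (ε_{m,n+1/2}E_{m,n+1/2} - ε_{m,n-1/2}E_{m,n-1/2})/Δy, is unchanged at every grid node (m,n). -/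
set_option maxHeartbeats 1000000

/-- Discrete divergence of the staggered field `εE` at node `(m,n)` on a periodic grid:
`Ex m n` stands for `E_{m+1/2,n}` and `Ey m n` stands for `E_{m,n+1/2}`. -/
noncomputable def ddiv {N : ℕ} (Δx Δy : ℝ) (εx εy Ex Ey : ZMod N → ZMod N → ℝ) (m n : ZMod N) : ℝ :=
  (εx m n * Ex m n - εx (m - 1) n * Ex (m - 1) n) / Δx +
    (εy m n * Ey m n - εy m (n - 1) * Ey m (n - 1)) / Δy

theorem stmt7 {N : ℕ} (hN : 1 < N) (Δx Δy : ℝ) (hΔx : 0 < Δx) (hΔy : 0 < Δy)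
    (εx εy : ZMod N → ZMod N → ℝ)
    (hεx : ∀ a b, 0 < εx a b) (hεy : ∀ a b, 0 < εy a b)
    (Ex Ey Ex' Ey' : ZMod N → ZMod N → ℝ) (i j : ZMod N) (η : ℝ)
    (hEy' : ∀ a b, Ey' a b = Ey a b
      + (if a = i ∧ b = j then -η / (εy i j * Δx) else 0)
      + (if a = i + 1 ∧ b = j then η / (εy (i + 1) j * Δx) else 0))
    (hEx' : ∀ a b, Ex' a b = Ex a b
      + (if a = i ∧ b = j then η / (εx i j * Δy) else 0)
      + (if a = i ∧ b = j + 1 then -η / (εx i (j + 1) * Δy) else 0)) :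
    ∀ m n : ZMod N, ddiv Δx Δy εx εy Ex' Ey' m n = ddiv Δx Δy εx εy Ex Ey m n := by
  haveI : Fact (1 < N) := ⟨hN⟩
  have hone : (1 : ZMod N) ≠ 0 := one_ne_zero
  have haddne : ∀ a : ZMod N, a ≠ a + 1 := fun a h => hone (left_eq_add.mp h)
  have hx1 := (hεx i j).ne'
  have hx2 := (hεx i (j + 1)).ne'
  have hy1 := (hεy i j).ne'
  have hy2 := (hεy (i + 1) j).ne'
  have keyx : ∀ a b, εx a b * Ex' a b = εx a b * Ex a b
      + ((if a = i ∧ b = j then η / Δy else 0)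
        + (if a = i ∧ b = j + 1 then -η / Δy else 0)) := by
    intro a b
    rw [hEx']
    split_ifs with h h' h''
    · exact absurd (h.2.symm.trans h'.2) (haddne j)
    · obtain ⟨rfl, rfl⟩ := h; field_simp; ring
    · obtain ⟨rfl, rfl⟩ := h''; field_simp; ring
    · ring
  have keyy : ∀ a b, εy a b * Ey' a b = εy a b * Ey a b
      + ((if a = i ∧ b = j then -η / Δx else 0)
        + (if a = i + 1 ∧ b = j then η / Δx else 0)) := by
    intro a b
    rw [hEy']
    split_ifs with h h' h''
    · exact absurd (h.1.symm.trans h'.1) (haddne i)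
    · obtain ⟨rfl, rfl⟩ := h; field_simp; ring
    · obtain ⟨rfl, rfl⟩ := h''; field_simp; ring
    · ring
  intro m n
  simp only [ddiv, keyx, keyy, sub_eq_iff_eq_add]
  split_ifs <;> ring
end

section
/- For the plaquette update with flux η applied to cell (i,j), the resulting change in the discrete energy F^h[E] = (ΔΩ/2)Σ_{i,j}(ε_{i,j+1/2}E²_{i,j+1/2} + ε_{i+1/2,j}E²_{i+1/2,j}) equals δF^h(η) = (η²/2)[ (Δx/Δy)(1/ε_{i+1/2,j} + 1/ε_{i+1/2,j+1}) + (Δy/Δx)(1/ε_{i,j+1/2} + 1/ε_{i+1,j+1/2}) ] + η[ Δx(E_{i+1/2,j} - E_{i+1/2,j+1}) + Δy(E_{i+1,j+1/2} - E_{i,j+1/2}) ]. -/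
/-- Discrete electrostatic energy on a periodic staggered `N×N` grid:
`Ex i j = E_{i+1/2,j}`, `Ey i j = E_{i,j+1/2}`. -/
noncomputable def discreteEnergy (N : ℕ) [NeZero N] (Δx Δy : ℝ)
    (εx εy Ex Ey : ZMod N → ZMod N → ℝ) : ℝ :=
  Δx * Δy / 2 * ∑ i : ZMod N, ∑ j : ZMod N,
    (εy i j * Ey i j ^ 2 + εx i j * Ex i j ^ 2)

theorem stmt8 {N : ℕ} [NeZero N] (hN : 2 ≤ N) (Δx Δy : ℝ) (hΔx : 0 < Δx) (hΔy : 0 < Δy)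
    (εx εy : ZMod N → ZMod N → ℝ)
    (hεx : ∀ a b, 0 < εx a b) (hεy : ∀ a b, 0 < εy a b)
    (Ex Ey Ex' Ey' : ZMod N → ZMod N → ℝ) (i j : ZMod N) (η : ℝ)
    (hEy' : ∀ a b, Ey' a b = Ey a b
      + (if a = i ∧ b = j then -η / (εy i j * Δx) else 0)
      + (if a = i + 1 ∧ b = j then η / (εy (i + 1) j * Δx) else 0))
    (hEx' : ∀ a b, Ex' a b = Ex a b
      + (if a = i ∧ b = j then η / (εx i j * Δy) else 0)
      + (if a = i ∧ b = j + 1 then -η / (εx i (j + 1) * Δy) else 0)) :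
    discreteEnergy N Δx Δy εx εy Ex' Ey' - discreteEnergy N Δx Δy εx εy Ex Ey =
      η ^ 2 / 2 * (Δx / Δy * (1 / εx i j + 1 / εx i (j + 1))
          + Δy / Δx * (1 / εy i j + 1 / εy (i + 1) j))
        + η * (Δx * (Ex i j - Ex i (j + 1)) + Δy * (Ey (i + 1) j - Ey i j)) := by
  haveI : Fact (1 < N) := ⟨hN⟩
  have hone : (1 : ZMod N) ≠ 0 := one_ne_zero
  have hi : i + 1 ≠ i := by
    intro h
    exact hone (by linear_combination h - (add_comm i 1).symm)
  have hj : j + 1 ≠ j := by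
    intro h
    exact hone (by linear_combination h - (add_comm j 1).symm)
  set c1 : ℝ := εy i j * ((Ey i j + -η / (εy i j * Δx)) ^ 2 - Ey i j ^ 2)
    + εx i j * ((Ex i j + η / (εx i j * Δy)) ^ 2 - Ex i j ^ 2) with hc1
  set c2 : ℝ := εy (i + 1) j * ((Ey (i + 1) j + η / (εy (i + 1) j * Δx)) ^ 2
    - Ey (i + 1) j ^ 2) with hc2
  set c3 : ℝ := εx i (j + 1) * ((Ex i (j + 1) + -η / (εx i (j + 1) * Δy)) ^ 2
    - Ex i (j + 1) ^ 2) with hc3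
  have key : ∀ a b : ZMod N,
      (εy a b * Ey' a b ^ 2 + εx a b * Ex' a b ^ 2)
        - (εy a b * Ey a b ^ 2 + εx a b * Ex a b ^ 2)
      = (if a = i then (if b = j then c1 else 0) else 0)
        + (if a = i + 1 then (if b = j then c2 else 0) else 0)
        + (if a = i then (if b = j + 1 then c3 else 0) else 0) := by
    intro a b
    rw [hEy', hEx']
    have hii : i ≠ i + 1 := fun h => hi h.symm
    have hjj : j ≠ j + 1 := fun h => hj h.symm
    clear hEy' hEx'
    by_cases ha : a = i <;> by_cases ha1 : a = i + 1 <;>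
      by_cases hb : b = j <;> by_cases hb1 : b = j + 1 <;>
      (try simp_all) <;> (try ring)
  have hsum : (∑ a : ZMod N, ∑ b : ZMod N,
      (εy a b * Ey' a b ^ 2 + εx a b * Ex' a b ^ 2))
      - (∑ a : ZMod N, ∑ b : ZMod N,
      (εy a b * Ey a b ^ 2 + εx a b * Ex a b ^ 2)) = c1 + c2 + c3 := by
    rw [← Finset.sum_sub_distrib]
    simp_rw [← Finset.sum_sub_distrib, key, Finset.sum_add_distrib, Finset.sum_ite_irrel, Finset.sum_const_zero,
      Finset.sum_ite_eq', Finset.mem_univ, if_true]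
  have hexp : discreteEnergy N Δx Δy εx εy Ex' Ey' - discreteEnergy N Δx Δy εx εy Ex Ey
      = Δx * Δy / 2 * (c1 + c2 + c3) := by
    unfold discreteEnergy
    rw [← mul_sub, hsum]
  rw [hexp, hc1, hc2, hc3]
  have e1 := (hεx i j).ne'
  have e2 := (hεx i (j+1)).ne'
  have e3 := (hεy i j).ne'
  have e4 := (hεy (i+1) j).ne'
  field_simp
  ring
end

section
/- The hierarchical block update on a rectangular block with corners (i_min, j_min) and (i_max, j_max) — adding -η/(ε Δx) to all y-edges on the left boundary, +η/(ε Δx) to all y-edges on the right boundary, +η/(ε Δy) to all x-edges on the bottom boundary, and -η/(ε Δy) to all x-edges on the top boundary — preserves the discrete divergence ∇_h·(εE) at every node of the grid, for any η ∈ ℝ. -/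
section aux
variable {N : ℕ} [NeZero N]

omit [NeZero N] in
lemma castinj {t t' : ℕ} (ht : t < N) (ht' : t' < N) (h : (t : ZMod N) = (t' : ZMod N)) : t = t' := by
  have h1 := ZMod.val_natCast_of_lt ht
  have h2 := ZMod.val_natCast_of_lt ht'
  rw [← h1, ← h2, h]

omit [NeZero N] in
lemma ind_sum (s : Finset ℕ) (g : ℕ → ZMod N)
    (hg : ∀ t ∈ s, ∀ t' ∈ s, g t = g t' → t = t') (m : ZMod N) :
    (if ∃ t ∈ s, m = g t then (1:ℝ) else 0) = ∑ t ∈ s, if m = g t then (1:ℝ) else 0 := by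
  by_cases h : ∃ t ∈ s, m = g t
  · obtain ⟨t, ht, hm⟩ := h
    rw [if_pos ⟨t, ht, hm⟩, Finset.sum_eq_single t]
    · simp [hm]
    · intro t' ht' hne
      rw [if_neg]
      intro hm'
      exact hne (hg t' ht' t ht (hm'.symm.trans hm))
    · intro h; exact absurd ht h
  · rw [if_neg h, eq_comm]
    exact Finset.sum_eq_zero fun t ht => if_neg fun hm => h ⟨t, ht, hm⟩

lemma tele (a b : ℕ) (hab : a ≤ b) (hb : b ≤ N) (m : ZMod N) :
    (if ∃ t ∈ Finset.Ico a b, m = (t : ZMod N) then (1:ℝ) else 0)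
      - (if ∃ t ∈ Finset.Ico a b, m - 1 = (t : ZMod N) then (1:ℝ) else 0)
    = (if m = (a : ZMod N) then (1:ℝ) else 0) - (if m = (b : ZMod N) then (1:ℝ) else 0) := by
  have inj1 : ∀ t ∈ Finset.Ico a b, ∀ t' ∈ Finset.Ico a b,
      (t : ZMod N) = (t' : ZMod N) → t = t' := by
    intro t ht t' ht' h
    simp only [Finset.mem_Ico] at ht ht'
    exact castinj (lt_of_lt_of_le ht.2 hb) (lt_of_lt_of_le ht'.2 hb) h
  have inj2 : ∀ t ∈ Finset.Ico a b, ∀ t' ∈ Finset.Ico a b,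
      ((t + 1 : ℕ) : ZMod N) = ((t' + 1 : ℕ) : ZMod N) → t = t' := by
    intro t ht t' ht' h
    push_cast at h
    exact inj1 t ht t' ht' (add_right_cancel h)
  have e2 : (if ∃ t ∈ Finset.Ico a b, m - 1 = (t : ZMod N) then (1:ℝ) else 0)
      = (if ∃ t ∈ Finset.Ico a b, m = ((t + 1 : ℕ) : ZMod N) then (1:ℝ) else 0) := by
    congr 1
    apply propext
    constructor
    · rintro ⟨t, ht, hm⟩; exact ⟨t, ht, by push_cast; rw [← hm]; ring⟩
    · rintro ⟨t, ht, hm⟩; exact ⟨t, ht, by push_cast at hm; rw [hm]; ring⟩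
  set F : ℕ → ℝ := fun t => if m = (t : ZMod N) then (1:ℝ) else 0 with hF
  rw [e2, ind_sum _ _ inj1 m, ind_sum _ _ inj2 m, ← Finset.sum_sub_distrib]
  show ∑ t ∈ Finset.Ico a b, (F t - F (t + 1)) = F a - F b
  rw [Finset.sum_Ico_eq_sum_range]
  have h := Finset.sum_range_sub' (fun i => F (a + i)) (b - a)
  have hab' : a + (b - a) = b := by omega
  simp only [Nat.add_zero, hab'] at h
  exact h

lemma ite_and_mul (P Q : Prop) [Decidable P] [Decidable Q] (c : ℝ) :
    (if P ∧ Q then c else 0) = (if P then (1:ℝ) else 0) * (if Q then (1:ℝ) else 0) * c := by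
  by_cases hP : P <;> by_cases hQ : Q <;> simp [hP, hQ]

end aux

/-- The hierarchical block update on the block `[i_min,i_max]×[j_min,j_max]` preserves
the discrete divergence of `εE` at every node, for any flux `η`. -/
theorem stmt12 {N : ℕ} [NeZero N] (Δx Δy : ℝ) (hΔx : 0 < Δx) (hΔy : 0 < Δy)
    (εx εy : ZMod N → ZMod N → ℝ)
    (hεx : ∀ a b, 0 < εx a b) (hεy : ∀ a b, 0 < εy a b)
    (imin imax jmin jmax : ℕ)
    (hi : imin < imax) (hiN : imax ≤ N) (hj : jmin < jmax) (hjN : jmax ≤ N)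
    (Ex Ey Ex' Ey' : ZMod N → ZMod N → ℝ) (η : ℝ)
    (hEy' : ∀ a b, Ey' a b = Ey a b
      + (if a = (imin : ZMod N) ∧ ∃ t ∈ Finset.Ico jmin jmax, b = (t : ZMod N)
          then -η / (εy a b * Δx) else 0)
      + (if a = (imax : ZMod N) ∧ ∃ t ∈ Finset.Ico jmin jmax, b = (t : ZMod N)
          then η / (εy a b * Δx) else 0))
    (hEx' : ∀ a b, Ex' a b = Ex a b
      + (if (∃ t ∈ Finset.Ico imin imax, a = (t : ZMod N)) ∧ b = (jmin : ZMod N)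
          then η / (εx a b * Δy) else 0)
      + (if (∃ t ∈ Finset.Ico imin imax, a = (t : ZMod N)) ∧ b = (jmax : ZMod N)
          then -η / (εx a b * Δy) else 0)) :
    ∀ m n : ZMod N, ddiv Δx Δy εx εy Ex' Ey' m n = ddiv Δx Δy εx εy Ex Ey m n := by
  intro m n
  have h1 := tele imin imax hi.le hiN m
  have h2 := tele jmin jmax hj.le hjN n
  simp only [ddiv, hEx', hEy', ite_and_mul]
  set pm := (if ∃ t ∈ Finset.Ico imin imax, m = (t : ZMod N) then (1:ℝ) else 0) with hpm
  set pm' := (if ∃ t ∈ Finset.Ico imin imax, m - 1 = (t : ZMod N) then (1:ℝ) else 0) with hpm'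
  set qn := (if ∃ t ∈ Finset.Ico jmin jmax, n = (t : ZMod N) then (1:ℝ) else 0) with hqn
  set qn' := (if ∃ t ∈ Finset.Ico jmin jmax, n - 1 = (t : ZMod N) then (1:ℝ) else 0) with hqn'
  set da := (if m = (imin : ZMod N) then (1:ℝ) else 0) with hda
  set db := (if m = (imax : ZMod N) then (1:ℝ) else 0) with hdb
  set ea := (if n = (jmin : ZMod N) then (1:ℝ) else 0) with hea
  set eb := (if n = (jmax : ZMod N) then (1:ℝ) else 0) with heb
  have e1 : pm' = pm - da + db := by linarith
  have e2 : qn' = qn - ea + eb := by linarith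
  rw [e1, e2]
  have hx1 := (hεx m n).ne'
  have hx2 := (hεx (m - 1) n).ne'
  have hy1 := (hεy m n).ne'
  have hy2 := (hεy m (n - 1)).ne'
  field_simp
  ring
end

section
/- Let E : ℤ² → ℝ² be a discrete edge field on a periodic N×N staggered grid, and suppose both the discrete curl vanishes at every plaquette, (∇_h×E)_{i+1/2,j+1/2} = (E_{i+1,j+1/2} - E_{i,j+1/2})/Δx - (E_{i+1/2,j+1} - E_{i+1/2,j})/Δy = 0, and the discrete averages of each component vanish. Then for any other field E' in the same constraint set S_{ρ,h} (i.e., ∇_h·(εE') = ∇_h·(εE)), the difference D = E' - E satisfies ∇_h·(εD) = 0, and F^h[E'] = F^h[E] + F^h[D] ≥ F^h[E], where F^h is the ε-weighted discrete energy. -/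
namespace ZMod

variable {N : ℕ} [NeZero N]

theorem apply_eq_apply_zero_of_forall_add_one {α : Type*} {f : ZMod N → α}
    (hf : ∀ i, f (i + 1) = f i) (i : ZMod N) : f i = f 0 := by
  have hnat : ∀ k : ℕ, f k = f 0 := by
    intro k
    induction k with
    | zero => simp
    | succ k ih => rw [Nat.cast_succ, hf, ih]
  rw [← natCast_zmod_val i, hnat]

theorem eq_zero_of_forall_add_one_of_sum_eq_zero {M : Type*} [AddCommGroup M] [IsAddTorsionFree M]
    {f : ZMod N → M} (hf : ∀ i, f (i + 1) = f i) (hsum : ∑ i, f i = 0) (i : ZMod N) :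
    f i = 0 := by
  rw [apply_eq_apply_zero_of_forall_add_one hf]
  rw [Finset.sum_congr rfl fun i _ => apply_eq_apply_zero_of_forall_add_one hf i,
    Finset.sum_const, Finset.card_univ, card] at hsum
  exact (nsmul_eq_zero_iff_right (NeZero.ne N)).1 hsum

theorem sum_range_natCast {M : Type*} [AddCommMonoid M] (g : ZMod N → M) :
    ∑ l ∈ Finset.range N, g l = ∑ i, g i :=
  Finset.sum_nbij' (↑) val (fun _ _ => Finset.mem_univ _)
    (fun i _ => Finset.mem_range.2 (val_lt i)) (fun _ hl => val_cast_of_lt (Finset.mem_range.1 hl))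
    (fun i _ => natCast_zmod_val i) (fun _ _ => rfl)

theorem exists_sub_eq_of_sum_eq_zero {M : Type*} [AddCommGroup M] {g : ZMod N → M}
    (hg : ∑ i, g i = 0) : ∃ ψ : ZMod N → M, ∀ k, ψ (k + 1) - ψ k = g k := by
  refine ⟨fun k => ∑ l ∈ Finset.range k.val, g l, fun k => ?_⟩
  have hval : (k + 1).val = (k.val + 1) % N := by
    rw [← val_natCast, Nat.cast_succ, natCast_zmod_val]
  have hsucc : ∑ l ∈ Finset.range (k.val + 1), g l = ∑ l ∈ Finset.range k.val, g l + g k := by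
    rw [Finset.sum_range_succ, natCast_zmod_val]
  dsimp only
  rcases (show k.val + 1 ≤ N from val_lt k).lt_or_eq with hlt | heq
  · rw [hval, Nat.mod_eq_of_lt hlt, hsucc, add_sub_cancel_left]
  · rw [heq, sum_range_natCast, hg] at hsucc
    rw [hval, heq, Nat.mod_self, Finset.range_zero, Finset.sum_empty, zero_sub, neg_eq_iff_eq_neg,
      eq_neg_iff_add_eq_zero, hsucc]

end ZMod

section Potential

variable {N : ℕ} {M : Type*} [AddCommGroup M]

/-- `∇_h × E = 0` multiplied by `Δx Δy`, with `X = Δx Ex` and `Y = Δy Ey`. -/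
def IsCurlFree (X Y : ZMod N → ZMod N → M) : Prop :=
  ∀ i j, Y (i + 1) j - Y i j = X i (j + 1) - X i j

theorem IsCurlFree.swap {X Y : ZMod N → ZMod N → M} (h : IsCurlFree X Y) :
    IsCurlFree (fun a b => Y b a) (fun a b => X b a) :=
  fun a b => (h b a).symm

theorem IsCurlFree.sum_eq_zero [NeZero N] [IsAddTorsionFree M] {X Y : ZMod N → ZMod N → M}
    (h : IsCurlFree X Y) (hY : ∑ i, ∑ j, Y i j = 0) (i : ZMod N) : ∑ j, Y i j = 0 := by
  refine ZMod.eq_zero_of_forall_add_one_of_sum_eq_zero (fun i => ?_) hY i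
  rw [← sub_eq_zero, ← Finset.sum_sub_distrib]
  simp only [h i, Finset.sum_sub_distrib, sub_eq_zero]
  exact Fintype.sum_equiv (Equiv.addRight 1) _ _ fun _ => rfl

theorem IsCurlFree.exists_potential [NeZero N] {X Y : ZMod N → ZMod N → M} (h : IsCurlFree X Y)
    (hX : ∑ i, X i 0 = 0) (hY : ∀ i, ∑ j, Y i j = 0) :
    ∃ φ : ZMod N → ZMod N → M,
      ∀ i j, φ (i + 1) j - φ i j = X i j ∧ φ i (j + 1) - φ i j = Y i j := by
  obtain ⟨a, ha⟩ := ZMod.exists_sub_eq_of_sum_eq_zero hX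
  choose ψ hψ using fun i => ZMod.exists_sub_eq_of_sum_eq_zero (hY i)
  refine ⟨fun i j => a i + (ψ i j - ψ i 0), fun i j => ⟨?_, ?_⟩⟩
  · -- the defect `ψ (i + 1) - ψ i - X i` has zero `j`-difference by the curl condition
    have hdefect : ∀ j, ψ (i + 1) j - ψ i j - X i j = ψ (i + 1) 0 - ψ i 0 - X i 0 :=
      ZMod.apply_eq_apply_zero_of_forall_add_one fun j => by
        have hij := h i j
        rw [← hψ, ← hψ] at hij
        rw [← sub_eq_zero, ← sub_eq_zero.2 hij]
        abel
    calc a (i + 1) + (ψ (i + 1) j - ψ (i + 1) 0) - (a i + (ψ i j - ψ i 0))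
        = (a (i + 1) - a i) + (ψ (i + 1) j - ψ i j - X i j)
            - (ψ (i + 1) 0 - ψ i 0 - X i 0) + X i j - X i 0 := by abel
      _ = X i j := by rw [ha, hdefect]; abel
  · simp only [← hψ]; abel

end Potential

theorem exists_grad_eq_of_curl_eq_zero {N : ℕ} [NeZero N] {Δx Δy : ℝ} (hΔx : Δx ≠ 0)
    (hΔy : Δy ≠ 0) {Ex Ey : ZMod N → ZMod N → ℝ}
    (hcurl : ∀ i j, (Ey (i + 1) j - Ey i j) / Δx - (Ex i (j + 1) - Ex i j) / Δy = 0)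
    (hmeanx : ∑ i, ∑ j, Ex i j = 0) (hmeany : ∑ i, ∑ j, Ey i j = 0) :
    ∃ φ : ZMod N → ZMod N → ℝ, ∀ i j,
      Ex i j = (φ (i + 1) j - φ i j) / Δx ∧ Ey i j = (φ i (j + 1) - φ i j) / Δy := by
  have hXY : IsCurlFree (fun i j => Δx * Ex i j) (fun i j => Δy * Ey i j) := fun i j => by
    have := hcurl i j
    field_simp at this
    linear_combination this
  have hX : ∀ j, ∑ i, Δx * Ex i j = 0 := hXY.swap.sum_eq_zero <| by
    rw [Finset.sum_comm]; simp only [← Finset.mul_sum, hmeanx, mul_zero]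
  have hY : ∀ i, ∑ j, Δy * Ey i j = 0 := hXY.sum_eq_zero <| by
    simp only [← Finset.mul_sum, hmeany, mul_zero]
  obtain ⟨φ, hφ⟩ := hXY.exists_potential (hX 0) hY
  refine ⟨φ, fun i j => ⟨?_, ?_⟩⟩
  · rw [(hφ i j).1, mul_div_cancel_left₀ _ hΔx]
  · rw [(hφ i j).2, mul_div_cancel_left₀ _ hΔy]

theorem Fintype.sum_mul_add_sub_eq_sum_mul_sub_sub {G R : Type*} [AddGroup G] [Fintype G]
    [CommRing R] (a φ : G → R) (c : G) :
    ∑ i, a i * (φ (i + c) - φ i) = ∑ i, φ i * (a (i - c) - a i) := by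
  have hshift : ∑ i, a i * φ (i + c) = ∑ i, a (i - c) * φ i :=
    Fintype.sum_equiv (Equiv.addRight c) _ _ fun i => by simp
  simp only [mul_sub, sub_mul, Finset.sum_sub_distrib, hshift, mul_comm (φ _)]

noncomputable def weightedInner {N : ℕ} [NeZero N] (εx εy Ex Ey Fx Fy : ZMod N → ZMod N → ℝ) : ℝ :=
  ∑ i, ∑ j, (εy i j * Ey i j * Fy i j + εx i j * Ex i j * Fx i j)

theorem weightedInner_grad {N : ℕ} [NeZero N] (Δx Δy : ℝ) (εx εy Dx Dy φ : ZMod N → ZMod N → ℝ) :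
    weightedInner εx εy Dx Dy (fun i j => (φ (i + 1) j - φ i j) / Δx)
        (fun i j => (φ i (j + 1) - φ i j) / Δy) =
      -∑ i, ∑ j, φ i j * ddiv Δx Δy εx εy Dx Dy i j := by
  have hx : ∀ j, ∑ i, εx i j * Dx i j * (φ (i + 1) j - φ i j) =
      ∑ i, φ i j * (εx (i - 1) j * Dx (i - 1) j - εx i j * Dx i j) := fun j =>
    Fintype.sum_mul_add_sub_eq_sum_mul_sub_sub (fun i => εx i j * Dx i j) (fun i => φ i j) 1
  have hy : ∀ i, ∑ j, εy i j * Dy i j * (φ i (j + 1) - φ i j) =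
      ∑ j, φ i j * (εy i (j - 1) * Dy i (j - 1) - εy i j * Dy i j) := fun i =>
    Fintype.sum_mul_add_sub_eq_sum_mul_sub_sub (fun j => εy i j * Dy i j) (φ i) 1
  calc weightedInner εx εy Dx Dy (fun i j => (φ (i + 1) j - φ i j) / Δx)
        (fun i j => (φ i (j + 1) - φ i j) / Δy)
      = (∑ i, ∑ j, εy i j * Dy i j * (φ i (j + 1) - φ i j)) / Δy
          + (∑ j, ∑ i, εx i j * Dx i j * (φ (i + 1) j - φ i j)) / Δx := by
        rw [Finset.sum_comm (f := fun j i => εx i j * Dx i j * (φ (i + 1) j - φ i j))]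
        simp only [weightedInner, Finset.sum_div, ← Finset.sum_add_distrib, mul_div_assoc]
    _ = (∑ i, ∑ j, φ i j * (εy i (j - 1) * Dy i (j - 1) - εy i j * Dy i j)) / Δy
          + (∑ j, ∑ i, φ i j * (εx (i - 1) j * Dx (i - 1) j - εx i j * Dx i j)) / Δx := by
        simp only [hx, hy]
    _ = -∑ i, ∑ j, φ i j * ddiv Δx Δy εx εy Dx Dy i j := by
        rw [Finset.sum_comm
          (f := fun j i => φ i j * (εx (i - 1) j * Dx (i - 1) j - εx i j * Dx i j))]
        simp only [ddiv, Finset.sum_div, ← Finset.sum_neg_distrib, ← Finset.sum_add_distrib]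
        refine Finset.sum_congr rfl fun i _ => Finset.sum_congr rfl fun j _ => ?_
        ring

theorem weightedInner_eq_zero_of_ddiv_eq_zero {N : ℕ} [NeZero N] {Δx Δy : ℝ}
    {εx εy Dx Dy Ex Ey φ : ZMod N → ZMod N → ℝ} (hD : ∀ m n, ddiv Δx Δy εx εy Dx Dy m n = 0)
    (hE : ∀ i j, Ex i j = (φ (i + 1) j - φ i j) / Δx ∧ Ey i j = (φ i (j + 1) - φ i j) / Δy) :
    weightedInner εx εy Dx Dy Ex Ey = 0 := by
  obtain ⟨rfl, rfl⟩ : Ex = _ ∧ Ey = _ :=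
    ⟨funext₂ fun i j => (hE i j).1, funext₂ fun i j => (hE i j).2⟩
  simp only [weightedInner_grad, hD, mul_zero, Finset.sum_const_zero, neg_zero]

theorem ddiv_sub {N : ℕ} (Δx Δy : ℝ) (εx εy Ex Ey Ex' Ey' : ZMod N → ZMod N → ℝ) (m n : ZMod N) :
    ddiv Δx Δy εx εy (fun a b => Ex' a b - Ex a b) (fun a b => Ey' a b - Ey a b) m n =
      ddiv Δx Δy εx εy Ex' Ey' m n - ddiv Δx Δy εx εy Ex Ey m n := by
  simp only [ddiv]
  ring

theorem discreteEnergy_eq_add_add_weightedInner {N : ℕ} [NeZero N] (Δx Δy : ℝ)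
    (εx εy Ex Ey Ex' Ey' : ZMod N → ZMod N → ℝ) :
    discreteEnergy N Δx Δy εx εy Ex' Ey' =
      discreteEnergy N Δx Δy εx εy Ex Ey +
        discreteEnergy N Δx Δy εx εy (fun a b => Ex' a b - Ex a b) (fun a b => Ey' a b - Ey a b) +
        Δx * Δy * weightedInner εx εy (fun a b => Ex' a b - Ex a b)
          (fun a b => Ey' a b - Ey a b) Ex Ey := by
  simp only [discreteEnergy, weightedInner, Finset.mul_sum, ← Finset.sum_add_distrib]
  refine Finset.sum_congr rfl fun i _ => Finset.sum_congr rfl fun j _ => ?_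
  ring

theorem discreteEnergy_nonneg {N : ℕ} [NeZero N] {Δx Δy : ℝ} (hΔ : 0 ≤ Δx * Δy)
    {εx εy : ZMod N → ZMod N → ℝ} (hεx : ∀ a b, 0 ≤ εx a b) (hεy : ∀ a b, 0 ≤ εy a b)
    (Ex Ey : ZMod N → ZMod N → ℝ) : 0 ≤ discreteEnergy N Δx Δy εx εy Ex Ey := by
  have hterm (i j : ZMod N) : 0 ≤ εy i j * Ey i j ^ 2 + εx i j * Ex i j ^ 2 := by
    have := hεx i j; have := hεy i j; positivity
  exact mul_nonneg (by positivity) <|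
    Finset.sum_nonneg fun i _ => Finset.sum_nonneg fun j _ => hterm i j

theorem stmt18 {N : ℕ} [NeZero N] (Δx Δy : ℝ) (hΔx : 0 < Δx) (hΔy : 0 < Δy)
    (εx εy : ZMod N → ZMod N → ℝ)
    (hεx : ∀ a b, 0 < εx a b) (hεy : ∀ a b, 0 < εy a b)
    (Ex Ey Ex' Ey' : ZMod N → ZMod N → ℝ)
    (hcurl : ∀ i j : ZMod N,
      (Ey (i + 1) j - Ey i j) / Δx - (Ex i (j + 1) - Ex i j) / Δy = 0)
    (hmeanx : ∑ i : ZMod N, ∑ j : ZMod N, Ex i j = 0)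
    (hmeany : ∑ i : ZMod N, ∑ j : ZMod N, Ey i j = 0)
    (hdiv : ∀ m n : ZMod N,
      ddiv Δx Δy εx εy Ex' Ey' m n = ddiv Δx Δy εx εy Ex Ey m n) :
    (∀ m n : ZMod N,
        ddiv Δx Δy εx εy (fun a b => Ex' a b - Ex a b) (fun a b => Ey' a b - Ey a b) m n = 0) ∧
      discreteEnergy N Δx Δy εx εy Ex' Ey' =
        discreteEnergy N Δx Δy εx εy Ex Ey +
          discreteEnergy N Δx Δy εx εy (fun a b => Ex' a b - Ex a b)
            (fun a b => Ey' a b - Ey a b) ∧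
      discreteEnergy N Δx Δy εx εy Ex Ey ≤ discreteEnergy N Δx Δy εx εy Ex' Ey' := by
  have hdivD (m n : ZMod N) :
      ddiv Δx Δy εx εy (fun a b => Ex' a b - Ex a b) (fun a b => Ey' a b - Ey a b) m n = 0 := by
    rw [ddiv_sub, hdiv, sub_self]
  obtain ⟨φ, hφ⟩ := exists_grad_eq_of_curl_eq_zero hΔx.ne' hΔy.ne' hcurl hmeanx hmeany
  have henergy := discreteEnergy_eq_add_add_weightedInner Δx Δy εx εy Ex Ey Ex' Ey'
  rw [weightedInner_eq_zero_of_ddiv_eq_zero hdivD hφ, mul_zero, add_zero] at henergy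
  refine ⟨hdivD, henergy, ?_⟩
  rw [henergy]
  exact le_add_of_nonneg_right <| discreteEnergy_nonneg (mul_pos hΔx hΔy).le
    (fun a b => (hεx a b).le) (fun a b => (hεy a b).le) _ _
end

section
/- Construct E on a periodic N_x×N_y staggered grid by the initialization scheme: with ρ̄_j = (1/N_x)Σ_i ρ_{ij}, set E_{i,1/2} = 0 and ε_{i,j+1/2}E_{i,j+1/2} = ε_{i,j-1/2}E_{i,j-1/2} + Δy·ρ̄_j for j = 1,…,N_y-1; then set E_{1/2,j} = 0 and ε_{i+1/2,j}E_{i+1/2,j} = ε_{i-1/2,j}E_{i-1/2,j} + Δx(ρ_{ij} - ρ̄_j) for i = 1,…,N_x-1. If Σ_{i,j} ρ_{ij} = 0, then the resulting periodic field E satisfies the discrete Gauss's law ∇_h·(εE) = ρ at every node. -/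
/-!
Each recursion says that the backward difference of the flux `εE` equals the source at every
node except the wrap-around node `0`. Summing the defect over the periodic grid, the flux terms
telescope away, so the defect at `0` equals minus the total source, which vanishes: in `x` the
source `ρ - ρ̄` has zero mean along each row by construction of `ρ̄`, and in `y` the source `ρ̄`
sums to zero because `ρ` does.
-/

/-- Discrete divergence of `εE` at node `(m,n)` on a periodic `Nx×Ny` staggered grid:
`Ex m n = E_{m+1/2,n}`, `Ey m n = E_{m,n+1/2}`. -/
noncomputable def ddiv2 {Nx Ny : ℕ} (Δx Δy : ℝ)
    (εx εy Ex Ey : ZMod Nx → ZMod Ny → ℝ) (m : ZMod Nx) (n : ZMod Ny) : ℝ :=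
  (εx m n * Ex m n - εx (m - 1) n * Ex (m - 1) n) / Δx +
    (εy m n * Ey m n - εy m (n - 1) * Ey m (n - 1)) / Δy

theorem forall_sub_apply_sub_eq_of_forall_ne {G M : Type*} [AddCommGroup G] [Fintype G]
    [AddCommGroup M] {f g : G → M} {d x₀ : G} (hg : ∑ x, g x = 0)
    (h : ∀ x ≠ x₀, f x - f (x - d) = g x) :
    ∀ x, f x - f (x - d) = g x := by
  have hshift : ∑ x, f (x - d) = ∑ x, f x := Equiv.sum_comp (Equiv.subRight d) f
  have hdefect : ∑ x, (f x - f (x - d) - g x) = f x₀ - f (x₀ - d) - g x₀ :=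
    Finset.sum_eq_single x₀ (fun x _ hx => sub_eq_zero.mpr (h x hx))
      (fun hx => absurd (Finset.mem_univ x₀) hx)
  rw [Finset.sum_sub_distrib, Finset.sum_sub_distrib, hshift, hg, sub_self, sub_zero,
    eq_comm, sub_eq_zero] at hdefect
  intro x
  by_cases hx : x = x₀
  · rwa [hx]
  · exact h x hx

theorem ZMod.sub_apply_sub_one_eq_of_rec {M : Type*} [AddCommGroup M] {N : ℕ} [NeZero N]
    {f g : ZMod N → M} (hg : ∑ i, g i = 0)
    (hrec : ∀ i : ℕ, 1 ≤ i → i ≤ N - 1 →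
      f (i : ZMod N) = f ((i - 1 : ℕ) : ZMod N) + g (i : ZMod N)) :
    ∀ m : ZMod N, f m - f (m - 1) = g m := by
  refine forall_sub_apply_sub_eq_of_forall_ne (x₀ := 0) hg fun m hm => ?_
  have hpos : 1 ≤ m.val := Nat.one_le_iff_ne_zero.mpr ((ZMod.val_ne_zero m).mpr hm)
  have hrec_m := hrec m.val hpos (Nat.le_sub_one_of_lt (ZMod.val_lt m))
  rw [Nat.cast_sub hpos, Nat.cast_one, ZMod.natCast_zmod_val] at hrec_m
  rw [hrec_m, add_sub_cancel_left]

theorem Finset.sum_sub_sum_div_card_eq_zero {ι K : Type*} [Fintype ι] [Nonempty ι]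
    [Field K] [CharZero K] (a : ι → K) :
    ∑ i, (a i - (∑ j, a j) / Fintype.card ι) = 0 := by
  have hcard : (Fintype.card ι : K) ≠ 0 := Nat.cast_ne_zero.mpr Fintype.card_ne_zero
  rw [Finset.sum_sub_distrib, Finset.sum_const, Finset.card_univ, nsmul_eq_mul,
    mul_div_cancel₀ _ hcard, sub_self]

theorem stmt19_general {Nx Ny : ℕ} [NeZero Nx] [NeZero Ny]
    (Δx Δy : ℝ) (hΔx : 0 < Δx) (hΔy : 0 < Δy)
    (εx εy : ZMod Nx → ZMod Ny → ℝ)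
    (ρ : ZMod Nx → ZMod Ny → ℝ)
    (hρ : ∑ i : ZMod Nx, ∑ j : ZMod Ny, ρ i j = 0)
    (ρbar : ZMod Ny → ℝ) (hρbar : ∀ j, ρbar j = (∑ i : ZMod Nx, ρ i j) / Nx)
    (Ex Ey : ZMod Nx → ZMod Ny → ℝ)
    (hEyrec : ∀ i : ZMod Nx, ∀ j : ℕ, 1 ≤ j → j ≤ Ny - 1 →
      εy i (j : ZMod Ny) * Ey i (j : ZMod Ny) =
        εy i ((j - 1 : ℕ) : ZMod Ny) * Ey i ((j - 1 : ℕ) : ZMod Ny) + Δy * ρbar (j : ZMod Ny))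
    (hExrec : ∀ j : ZMod Ny, ∀ i : ℕ, 1 ≤ i → i ≤ Nx - 1 →
      εx (i : ZMod Nx) j * Ex (i : ZMod Nx) j =
        εx ((i - 1 : ℕ) : ZMod Nx) j * Ex ((i - 1 : ℕ) : ZMod Nx) j +
          Δx * (ρ (i : ZMod Nx) j - ρbar j)) :
    ∀ (m : ZMod Nx) (n : ZMod Ny), ddiv2 Δx Δy εx εy Ex Ey m n = ρ m n := by
  intro m n
  have hdev : ∑ i, (ρ i n - ρbar n) = 0 := by
    simpa only [hρbar, ZMod.card] using Finset.sum_sub_sum_div_card_eq_zero (ρ · n)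
  have hρbar_sum : ∑ j, ρbar j = 0 := by
    rw [Finset.sum_congr rfl fun j _ => hρbar j, ← Finset.sum_div, Finset.sum_comm, hρ,
      zero_div]
  have hx := ZMod.sub_apply_sub_one_eq_of_rec (f := fun i => εx i n * Ex i n)
    (g := fun i => Δx * (ρ i n - ρbar n)) (by rw [← Finset.mul_sum, hdev, mul_zero])
    (hExrec n) m
  have hy := ZMod.sub_apply_sub_one_eq_of_rec (f := fun j => εy m j * Ey m j)
    (g := fun j => Δy * ρbar j) (by rw [← Finset.mul_sum, hρbar_sum, mul_zero])
    (hEyrec m) n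
  rw [ddiv2, hx, hy, mul_div_cancel_left₀ _ hΔx.ne', mul_div_cancel_left₀ _ hΔy.ne',
    sub_add_cancel]

theorem stmt19 {Nx Ny : ℕ} [NeZero Nx] [NeZero Ny]
    (Δx Δy : ℝ) (hΔx : 0 < Δx) (hΔy : 0 < Δy)
    (εx εy : ZMod Nx → ZMod Ny → ℝ)
    (hεx : ∀ a b, 0 < εx a b) (hεy : ∀ a b, 0 < εy a b)
    (ρ : ZMod Nx → ZMod Ny → ℝ)
    (hρ : ∑ i : ZMod Nx, ∑ j : ZMod Ny, ρ i j = 0)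
    (ρbar : ZMod Ny → ℝ) (hρbar : ∀ j, ρbar j = (∑ i : ZMod Nx, ρ i j) / Nx)
    (Ex Ey : ZMod Nx → ZMod Ny → ℝ)
    -- initialization of the y-component: E_{i,1/2} = 0 and the vertical recursion
    (hEy0 : ∀ i : ZMod Nx, Ey i 0 = 0)
    (hEyrec : ∀ i : ZMod Nx, ∀ j : ℕ, 1 ≤ j → j ≤ Ny - 1 →
      εy i (j : ZMod Ny) * Ey i (j : ZMod Ny) =
        εy i ((j - 1 : ℕ) : ZMod Ny) * Ey i ((j - 1 : ℕ) : ZMod Ny) + Δy * ρbar (j : ZMod Ny))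
    -- initialization of the x-component: E_{1/2,j} = 0 and the horizontal recursion
    (hEx0 : ∀ j : ZMod Ny, Ex 0 j = 0)
    (hExrec : ∀ j : ZMod Ny, ∀ i : ℕ, 1 ≤ i → i ≤ Nx - 1 →
      εx (i : ZMod Nx) j * Ex (i : ZMod Nx) j =
        εx ((i - 1 : ℕ) : ZMod Nx) j * Ex ((i - 1 : ℕ) : ZMod Nx) j +
          Δx * (ρ (i : ZMod Nx) j - ρbar j)) :
    ∀ (m : ZMod Nx) (n : ZMod Ny), ddiv2 Δx Δy εx εy Ex Ey m n = ρ m n :=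
  stmt19_general Δx Δy hΔx hΔy εx εy ρ hρ ρbar hρbar Ex Ey hEyrec hExrec
end
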